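/- The matrices ρ(t) and ρ(σ_1) satisfy the mixed braid relation ρ(t)·ρ(σ_1)·ρ(t)·ρ(σ_1) = ρ(σ_1)·ρ(t)·ρ(σ_1)·ρ(t). -/
import Mathlib


open LaurentPolynomial Matrix

/-- The ring `ℤ[a^{±1}, b^{±1}]`, realized as iterated Laurent polynomials. -/
noncomputable abbrev R2 : Type := LaurentPolynomial (LaurentPolynomial ℤ)

/-- The variable `a`. -/
noncomputable def a : R2 := LaurentPolynomial.C (T 1)

/-- The variable `b`. -/
noncomputable def b : R2 := T 1

/-- The matrix `ρ(t)` of size `n+2`: the identity matrix except that its `(1,1)` entry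
is `a*b` and its `(1,2)` entry is `1 - b`. -/
noncomputable def ρt (n : ℕ) : Matrix (Fin (n+2)) (Fin (n+2)) R2 :=
  fun k l => if k = 0 then (if l = 0 then a * b else if l = 1 then 1 - b else 0)
             else if k = l then 1 else 0

/-- The matrix `ρ(σ_i)` of size `n+2`, for `i : Fin (n+1)` (0-indexed; `i` corresponds
to the generator `σ_{i+1}` in the 1-indexed notation of the paper): the identity matrix
except that row `i+1` (0-indexed `i.succ`) has entry `a` in column `i`, entry `-a` in
column `i+1`, and entry `1` in column `i+2` (when it exists). -/
noncomputable def ρσ (n : ℕ) (i : Fin (n+1)) : Matrix (Fin (n+2)) (Fin (n+2)) R2 :=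
  fun k l => if k = i.succ then
      (if l = i.castSucc then a else if l = i.succ then -a
        else if (l : ℕ) = (i : ℕ) + 2 then 1 else 0)
    else if k = l then 1 else 0

lemma ρt_mul (n : ℕ) (X : Matrix (Fin (n+2)) (Fin (n+2)) R2) (k l : Fin (n+2)) :
    (ρt n * X) k l = if k = 0 then a*b * X 0 l + (1-b) * X 1 l else X k l := by
  rw [Matrix.mul_apply]
  rcases eq_or_ne k 0 with rfl | hk
  · have : ∀ j : Fin (n+2), ρt n 0 j * X j l =
        (if j = 0 then a*b * X 0 l else 0) + (if j = 1 then (1-b) * X 1 l else 0) := by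
      intro j
      rcases eq_or_ne j 0 with rfl | h0
      · simp [ρt]
      · rcases eq_or_ne j 1 with rfl | h1
        · simp [ρt]
        · simp [ρt, h0, h1]
    simp [this, Finset.sum_add_distrib, Finset.sum_ite_eq']
  · have : ∀ j : Fin (n+2), ρt n k j * X j l = if k = j then X j l else 0 := by
      intro j
      rcases eq_or_ne k j with rfl | h
      · simp [ρt, hk]
      · simp [ρt, hk, h]
    simp [this, hk]

lemma ρσ0_mul (n : ℕ) (X : Matrix (Fin (n+2)) (Fin (n+2)) R2)
    (h2 : ∀ j : Fin (n+2), (j:ℕ) = 2 → ∀ l, X j l = if j = l then 1 else 0) (k l : Fin (n+2)) :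
    (ρσ n 0 * X) k l = if k = 1 then
        a * X 0 l - a * X 1 l + (if (l:ℕ) = 2 then 1 else 0)
      else X k l := by
  rw [Matrix.mul_apply]
  have hsucc : (0 : Fin (n+1)).succ = 1 := rfl
  rcases eq_or_ne k 1 with rfl | hk
  · have : ∀ j : Fin (n+2), ρσ n 0 1 j * X j l =
        (if j = 0 then a * X 0 l else 0) + (if j = 1 then -(a * X 1 l) else 0)
          + (if j = l then (if (l:ℕ) = 2 then 1 else 0) else 0) := by
      intro j
      rcases eq_or_ne j 0 with rfl | h0
      · simp [ρσ, hsucc]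
        rintro rfl; simp
      · rcases eq_or_ne j 1 with rfl | h1
        · simp [ρσ, hsucc]
          rcases eq_or_ne (1 : Fin (n+2)) l with rfl | hl
          · simp; ring
          · simp [hl]; ring
        · by_cases hj2 : (j:ℕ) = 2
          · rw [h2 j hj2 l]
            rcases eq_or_ne j l with rfl | hjl
            · simp [ρσ, hsucc, h0, h1, hj2]
            · simp [ρσ, hsucc, h0, h1, hj2, hjl]
          · simp [ρσ, hsucc, h0, h1, hj2]
            rcases eq_or_ne j l with rfl | hjl
            · simp [hj2]
            · simp [hjl]
    simp [this, Finset.sum_add_distrib, Finset.sum_ite_eq']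
    ring
  · have : ∀ j : Fin (n+2), ρσ n 0 k j * X j l = if k = j then X j l else 0 := by
      intro j
      rcases eq_or_ne k j with rfl | h
      · simp [ρσ, hsucc, hk]
      · simp [ρσ, hsucc, hk, h]
    simp [this, hk]

lemma h2_ρt (n : ℕ) : ∀ j : Fin (n+2), (j:ℕ) = 2 → ∀ l, ρt n j l = if j = l then 1 else 0 := by
  intro j hj l
  have h0 : j ≠ 0 := by simp [Fin.ext_iff, hj]
  simp [ρt, h0]

lemma h2_ρσ (n : ℕ) : ∀ j : Fin (n+2), (j:ℕ) = 2 → ∀ l, ρσ n 0 j l = if j = l then 1 else 0 := by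
  intro j hj l
  have h1 : j ≠ 1 := by simp [Fin.ext_iff, hj]
  simp [ρσ, h1]

lemma h2_A (n : ℕ) : ∀ j : Fin (n+2), (j:ℕ) = 2 → ∀ l,
    (ρt n * ρσ n 0) j l = if j = l then 1 else 0 := by
  intro j hj l
  have h0 : j ≠ 0 := by simp [Fin.ext_iff, hj]
  rw [ρt_mul, if_neg h0]
  exact h2_ρσ n j hj l

lemma h2_B (n : ℕ) : ∀ j : Fin (n+2), (j:ℕ) = 2 → ∀ l,
    (ρt n * (ρσ n 0 * ρt n)) j l = if j = l then 1 else 0 := by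
  intro j hj l
  have h0 : j ≠ 0 := by simp [Fin.ext_iff, hj]
  have h1 : j ≠ 1 := by simp [Fin.ext_iff, hj]
  rw [ρt_mul, if_neg h0, ρσ0_mul n _ (h2_ρt n), if_neg h1]
  exact h2_ρt n j hj l


set_option maxHeartbeats 1000000 in
/-- The mixed braid relation `ρ(t) ρ(σ_1) ρ(t) ρ(σ_1) = ρ(σ_1) ρ(t) ρ(σ_1) ρ(t)`. -/
theorem rho_mixed_relation (n : ℕ) :
    ρt n * ρσ n 0 * ρt n * ρσ n 0 = ρσ n 0 * ρt n * ρσ n 0 * ρt n := by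
  simp only [mul_assoc]
  apply Matrix.ext
  intro k l
  simp only [ρt_mul, ρσ0_mul n _ (h2_A n), ρσ0_mul n _ (h2_ρt n), ρσ0_mul n _ (h2_B n)]
  simp only [ρt, ρσ, Fin.ext_iff, Fin.val_zero, Fin.val_one, Fin.coe_castSucc, Fin.val_succ,
    zero_add, Nat.zero_ne_one, Nat.one_ne_zero, if_true, if_false, ite_true, ite_false,
    OfNat.ofNat_ne_zero, OfNat.ofNat_ne_one, reduceCtorEq, reduceIte]
  split_ifs <;> first | ring1 | (exfalso; omega)
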